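/- There exists λ₀ > 0 such that for every λ ≥ λ₀ there exist s₀ > 0 and, for each s ≥ s₀(T⁴ + T⁸), a constant C > 0 (depending on Ω, λ, s, T and η₀) such that the function ρ(t) = e^{−(s/2)β*(t)} γ̂(t)^{−25/8} satisfies |ρ′(t)| ≤ C e^{(s/2)β*(t) − sβ̂(t)} γ̂(t)^{13/8} for all t ∈ (0,T). -/

import Mathlib

open MeasureTheory Real Set Filter Metric

noncomputable section

/-- Partial derivative in the `i`-th coordinate direction. -/
def pd {N : ℕ} (i : Fin N) (f : (Fin N → ℝ) → ℝ) (x : Fin N → ℝ) : ℝ :=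
  fderiv ℝ f x (Pi.single i 1)

/-- Spatial gradient. -/
def grad {N : ℕ} (f : (Fin N → ℝ) → ℝ) (x : Fin N → ℝ) : Fin N → ℝ :=
  fun i => pd i f x

/-- Laplacian. -/
def lap {N : ℕ} (f : (Fin N → ℝ) → ℝ) (x : Fin N → ℝ) : ℝ :=
  ∑ i, pd i (fun y => pd i f y) x

/-- Divergence of a vector field. -/
def dvg {N : ℕ} (F : (Fin N → ℝ) → (Fin N → ℝ)) (x : Fin N → ℝ) : ℝ :=
  ∑ i, pd i (fun y => F y i) x

/-- Euclidean dot product. -/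
def dot {N : ℕ} (a b : Fin N → ℝ) : ℝ := ∑ i, a i * b i

/-- Euclidean norm. -/
def eunorm {N : ℕ} (a : Fin N → ℝ) : ℝ := Real.sqrt (∑ i, (a i) ^ 2)

/-- Square of the `H¹(Ω)` norm (classical derivatives). -/
def H1sq {N : ℕ} (Ω : Set (Fin N → ℝ)) (f : (Fin N → ℝ) → ℝ) : ℝ :=
  ∫ x in Ω, ((f x) ^ 2 + ∑ i, (pd i f x) ^ 2)

/-- Square of the `H²(Ω)` norm (classical derivatives). -/
def H2sq {N : ℕ} (Ω : Set (Fin N → ℝ)) (f : (Fin N → ℝ) → ℝ) : ℝ :=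
  ∫ x in Ω, ((f x) ^ 2 + ∑ i, (pd i f x) ^ 2 + ∑ i, ∑ j, (pd i (fun y => pd j f y) x) ^ 2)

/-- Square of the `H³(Ω)` norm (classical derivatives). -/
def H3sq {N : ℕ} (Ω : Set (Fin N → ℝ)) (f : (Fin N → ℝ) → ℝ) : ℝ :=
  ∫ x in Ω, ((f x) ^ 2 + ∑ i, (pd i f x) ^ 2 + ∑ i, ∑ j, (pd i (fun y => pd j f y) x) ^ 2
    + ∑ i, ∑ j, ∑ k, (pd i (fun y => pd j (fun z => pd k f z) y) x) ^ 2)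

/-- Double integral over `D × (0,T)`. -/
def DInt {N : ℕ} (D : Set (Fin N → ℝ)) (T : ℝ) (F : (Fin N → ℝ) → ℝ → ℝ) : ℝ :=
  ∫ t in Ioo (0 : ℝ) T, ∫ x in D, F x t

/-- Sup of `|f|` over the closure of `Ω`. -/
def supAbs {N : ℕ} (Ω : Set (Fin N → ℝ)) (f : (Fin N → ℝ) → ℝ) : ℝ :=
  sSup ((fun x => |f x|) '' closure Ω)

/-- Carleman weight `φ`. -/
def phiW {N : ℕ} (T lam : ℝ) (η₀ : (Fin N → ℝ) → ℝ) (x : Fin N → ℝ) (t : ℝ) : ℝ :=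
  Real.exp (lam * η₀ x) / (t ^ 4 * (T - t) ^ 4)

/-- Carleman weight `α`. -/
def alpW {N : ℕ} (Ω : Set (Fin N → ℝ)) (T lam : ℝ) (η₀ : (Fin N → ℝ) → ℝ)
    (x : Fin N → ℝ) (t : ℝ) : ℝ :=
  (Real.exp (lam * η₀ x) - Real.exp (2 * lam * supAbs Ω η₀)) / (t ^ 4 * (T - t) ^ 4)

/-- The truncated time weight `l`. -/
def lW (T t : ℝ) : ℝ := if t ≤ T / 2 then T ^ 2 / 4 else t * (T - t)

/-- Weight `β` (non-vanishing at `t = 0`). -/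
def betaW {N : ℕ} (Ω : Set (Fin N → ℝ)) (T lam : ℝ) (η₀ : (Fin N → ℝ) → ℝ)
    (x : Fin N → ℝ) (t : ℝ) : ℝ :=
  (Real.exp (lam * η₀ x) - Real.exp (2 * lam * supAbs Ω η₀)) / (lW T t) ^ 4

/-- Weight `γ` (non-vanishing at `t = 0`). -/
def gamW {N : ℕ} (T lam : ℝ) (η₀ : (Fin N → ℝ) → ℝ) (x : Fin N → ℝ) (t : ℝ) : ℝ :=
  Real.exp (lam * η₀ x) / (lW T t) ^ 4

/-- `γ̂(t) = min over cl Ω of γ(·,t)`. -/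
def gamHat {N : ℕ} (Ω : Set (Fin N → ℝ)) (T lam : ℝ) (η₀ : (Fin N → ℝ) → ℝ) (t : ℝ) : ℝ :=
  sInf ((fun x => gamW T lam η₀ x t) '' closure Ω)

/-- `γ*(t) = max over cl Ω of γ(·,t)`. -/
def gamStar {N : ℕ} (Ω : Set (Fin N → ℝ)) (T lam : ℝ) (η₀ : (Fin N → ℝ) → ℝ) (t : ℝ) : ℝ :=
  sSup ((fun x => gamW T lam η₀ x t) '' closure Ω)

/-- `β̂(t) = min over cl Ω of β(·,t)`. -/
def betaHat {N : ℕ} (Ω : Set (Fin N → ℝ)) (T lam : ℝ) (η₀ : (Fin N → ℝ) → ℝ) (t : ℝ) : ℝ :=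
  sInf ((fun x => betaW Ω T lam η₀ x t) '' closure Ω)

/-- `β*(t) = max over cl Ω of β(·,t)`. -/
def betaStar {N : ℕ} (Ω : Set (Fin N → ℝ)) (T lam : ℝ) (η₀ : (Fin N → ℝ) → ℝ) (t : ℝ) : ℝ :=
  sSup ((fun x => betaW Ω T lam η₀ x t) '' closure Ω)

/-- Smoothness on the closed cylinder `cl(Ω) × [0,T]`. -/
def SmoothOnClQ {N : ℕ} (Ω : Set (Fin N → ℝ)) (T : ℝ) (q : (Fin N → ℝ) → ℝ → ℝ) : Prop :=
  ContDiffOn ℝ (⊤ : ℕ∞) (fun p : (Fin N → ℝ) × ℝ => q p.1 p.2) (closure Ω ×ˢ Icc 0 T)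

/-- The Carleman functional `I_β(s,σ;q)`. -/
def IB {N : ℕ} (Ω : Set (Fin N → ℝ)) (T lam : ℝ) (η₀ : (Fin N → ℝ) → ℝ)
    (s β σq : ℝ) (q : (Fin N → ℝ) → ℝ → ℝ) : ℝ :=
  s ^ (β + 3) * DInt Ω T (fun x t =>
      Real.exp (2 * s * alpW Ω T lam η₀ x t) * phiW T lam η₀ x t ^ (β + 3) * (q x t) ^ 2)
  + s ^ (β + 1) * DInt Ω T (fun x t =>
      Real.exp (2 * s * alpW Ω T lam η₀ x t) * phiW T lam η₀ x t ^ (β + 1) *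
        ∑ i, (pd i (fun y => q y t) x) ^ 2)
  + s ^ (β - 1) * DInt Ω T (fun x t =>
      Real.exp (2 * s * alpW Ω T lam η₀ x t) * phiW T lam η₀ x t ^ (β - 1) *
        (σq ^ 2 * (deriv (q x) t) ^ 2 +
          ∑ i, ∑ j, (pd i (fun y => pd j (fun z => q z t) y) x) ^ 2))

/-- The auxiliary weight `θ = ρ₁ s³ φ³ e^{sα}`. -/
def thetaW {N : ℕ} (Ω : Set (Fin N → ℝ)) (T lam : ℝ) (η₀ ρ₁ : (Fin N → ℝ) → ℝ)
    (s : ℝ) (x : Fin N → ℝ) (t : ℝ) : ℝ :=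
  ρ₁ x * s ^ 3 * phiW T lam η₀ x t ^ 3 * Real.exp (s * alpW Ω T lam η₀ x t)

/-- The `H⁻¹(Ω)` norm, defined by duality against smooth compactly supported functions. -/
def Hm1 {N : ℕ} (Ω : Set (Fin N → ℝ)) (g : (Fin N → ℝ) → ℝ) : ℝ :=
  sSup {r : ℝ | ∃ v : (Fin N → ℝ) → ℝ, ContDiff ℝ (⊤ : ℕ∞) v ∧ HasCompactSupport v ∧
    tsupport v ⊆ Ω ∧ (∫ x in Ω, ∑ i, (pd i v x) ^ 2) ≤ 1 ∧ r = ∫ x in Ω, g x * v x}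

/-!
Write `A` and `m` for the maximum and minimum of `e^{λη₀}` over `cl Ω` and
`E = e^{2λ‖η₀‖_∞}`. All three extrema are explicit, `β* = (A - E)/l⁴`, `β̂ = (m - E)/l⁴`,
`γ̂ = m/l⁴`, so `ρ = e^{a/l⁴} (m/l⁴)^{-25/8}` with `a = -(s/2)(A - E)` depends on `t` only through
`l`. It is constant for `t < T/2`. For `t > T/2`, `|ρ'| = ρ |l'| · 4|a/l⁴ - 25/8| / l = ρ · O(l⁻⁵)`,
while the right-hand side is `ρ e^{s(A - m)/l⁴} (m/l⁴)^{19/4} ≥ ρ · m^{19/4} l⁻¹⁹`; since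
`l ≤ T²/4`, the power `l⁻¹⁹` dominates `l⁻⁵`.
-/

open Topology

def expVals {N : ℕ} (Ω : Set (Fin N → ℝ)) (lam : ℝ) (η₀ : (Fin N → ℝ) → ℝ) : Set ℝ :=
  (fun x => Real.exp (lam * η₀ x)) '' closure Ω

def weightOfL (a m p l : ℝ) : ℝ := Real.exp (a / l ^ 4) * (m / l ^ 4) ^ p

section TimeWeight

variable {T t : ℝ}

lemma lW_pos (hT : 0 < T) (ht : t < T) : 0 < lW T t := by
  unfold lW
  split_ifs with h
  · positivity
  · exact mul_pos (by linarith) (by linarith)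

lemma lW_le : lW T t ≤ T ^ 2 / 4 := by
  unfold lW
  split_ifs
  · rfl
  · nlinarith [sq_nonneg (T - 2 * t)]

lemma deriv_comp_lW_of_lt (F : ℝ → ℝ) (ht : t < T / 2) : deriv (fun τ => F (lW T τ)) t = 0 := by
  have hconst : (fun τ => F (lW T τ)) =ᶠ[𝓝 t] fun _ => F (T ^ 2 / 4) :=
    eventuallyEq_of_mem (Iio_mem_nhds ht) fun τ hτ => by simp [lW, le_of_lt (mem_Iio.mp hτ)]
  rw [hconst.deriv_eq, deriv_const]

lemma hasDerivAt_lW_of_gt (ht : T / 2 < t) : HasDerivAt (lW T) (T - 2 * t) t := by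
  have hloc : (fun τ => τ * (T - τ)) =ᶠ[𝓝 t] lW T :=
    eventuallyEq_of_mem (Ioi_mem_nhds ht) fun τ hτ => (if_neg (not_le.mpr hτ)).symm
  have h : HasDerivAt (fun τ => τ * (T - τ)) (1 * (T - t) + t * (0 - 1)) t :=
    (hasDerivAt_id t).mul ((hasDerivAt_const t T).sub (hasDerivAt_id t))
  exact (h.congr_deriv (by ring)).congr_of_eventuallyEq hloc.symm

end TimeWeight

section Extrema

variable {N : ℕ} {Ω : Set (Fin N → ℝ)} {lam : ℝ} {η₀ : (Fin N → ℝ) → ℝ}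

lemma isCompact_expVals (hΩ : Bornology.IsBounded Ω) (hη₀ : ContinuousOn η₀ (closure Ω)) :
    IsCompact (expVals Ω lam η₀) :=
  hΩ.isCompact_closure.image_of_continuousOn (by fun_prop)

lemma sInf_expVals_pos (hK : IsCompact (expVals Ω lam η₀)) (hne : (expVals Ω lam η₀).Nonempty) :
    0 < sInf (expVals Ω lam η₀) := by
  obtain ⟨x, -, hx⟩ := hK.sInf_mem hne
  rw [← hx]
  positivity

variable (T t : ℝ)

lemma betaStar_eq (hne : (expVals Ω lam η₀).Nonempty) (hbdd : BddAbove (expVals Ω lam η₀)) :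
    betaStar Ω T lam η₀ t =
      (sSup (expVals Ω lam η₀) - exp (2 * lam * supAbs Ω η₀)) / lW T t ^ 4 := by
  have himage : (fun x => betaW Ω T lam η₀ x t) '' closure Ω =
      (fun y => (y - exp (2 * lam * supAbs Ω η₀)) / lW T t ^ 4) '' expVals Ω lam η₀ := by
    rw [expVals, ← image_comp]; rfl
  rw [betaStar, himage]
  exact (Monotone.map_csSup_of_continuousAt (by fun_prop) (fun a b hab => by gcongr) hne hbdd).symm

lemma betaHat_eq (hne : (expVals Ω lam η₀).Nonempty) (hbdd : BddBelow (expVals Ω lam η₀)) :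
    betaHat Ω T lam η₀ t =
      (sInf (expVals Ω lam η₀) - exp (2 * lam * supAbs Ω η₀)) / lW T t ^ 4 := by
  have himage : (fun x => betaW Ω T lam η₀ x t) '' closure Ω =
      (fun y => (y - exp (2 * lam * supAbs Ω η₀)) / lW T t ^ 4) '' expVals Ω lam η₀ := by
    rw [expVals, ← image_comp]; rfl
  rw [betaHat, himage]
  exact (Monotone.map_csInf_of_continuousAt (by fun_prop) (fun a b hab => by gcongr) hne hbdd).symm

lemma gamHat_eq (hne : (expVals Ω lam η₀).Nonempty) (hbdd : BddBelow (expVals Ω lam η₀)) :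
    gamHat Ω T lam η₀ t = sInf (expVals Ω lam η₀) / lW T t ^ 4 := by
  have himage : (fun x => gamW T lam η₀ x t) '' closure Ω =
      (fun y => y / lW T t ^ 4) '' expVals Ω lam η₀ := by
    rw [expVals, ← image_comp]; rfl
  rw [gamHat, himage]
  exact (Monotone.map_csInf_of_continuousAt (by fun_prop) (fun a b hab => by gcongr) hne hbdd).symm

end Extrema

lemma rpow_le_rpow_sub_mul_rpow {x₀ x e r : ℝ} (hx₀ : 0 < x₀) (hx : x₀ ≤ x) (her : e ≤ r) :
    x ^ e ≤ x₀ ^ (e - r) * x ^ r := by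
  have hratio : 1 ≤ x / x₀ := (one_le_div hx₀).mpr hx
  have hx0 : 0 ≤ x := hx₀.le.trans hx
  calc x ^ e = x₀ ^ e * (x / x₀) ^ e := by
        rw [Real.div_rpow hx0 hx₀.le]; field_simp
    _ ≤ x₀ ^ e * (x / x₀) ^ r := by gcongr
    _ = x₀ ^ (e - r) * x ^ r := by
        rw [Real.div_rpow hx0 hx₀.le, Real.rpow_sub hx₀]; ring

section WeightOfL

variable {m l : ℝ}

lemma hasDerivAt_weightOfL {a p : ℝ} (hm : 0 < m) (hl : 0 < l) :
    HasDerivAt (weightOfL a m p) (weightOfL a m p l * (-4 * (a / l ^ 4 + p) / l)) l := by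
  have hl4 : l ^ 4 ≠ 0 := by positivity
  have hpow : HasDerivAt (fun l : ℝ => l ^ 4) (4 * l ^ 3) l := by
    simpa using hasDerivAt_pow 4 l
  have hexp := ((hasDerivAt_const l a).div hpow hl4).exp
  have hrpow := ((hasDerivAt_const l m).div hpow hl4).rpow_const (p := p)
    (Or.inl (div_pos hm (pow_pos hl 4)).ne')
  refine (hexp.mul hrpow).congr_deriv ?_
  simp only [Pi.div_apply, weightOfL]
  rw [Real.rpow_sub_one (div_pos hm (pow_pos hl 4)).ne']
  field_simp
  ring

lemma abs_div_pow_four_add_le {L : ℝ} (a p : ℝ) (hl : 0 < l) (hlL : l ≤ L) :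
    |a / l ^ 4 + p| ≤ (|a| + |p| * L ^ 4) / l ^ 4 := by
  have hL4 : l ^ 4 ≤ L ^ 4 := by gcongr
  calc |a / l ^ 4 + p| ≤ |a / l ^ 4| + |p| := abs_add_le _ _
    _ = (|a| + |p| * l ^ 4) / l ^ 4 := by
        rw [abs_div, abs_of_pos (pow_pos hl 4)]; field_simp
    _ ≤ (|a| + |p| * L ^ 4) / l ^ 4 := by gcongr

lemma abs_deriv_weightOfL_le {c L : ℝ} (a p q : ℝ) (hm : 0 < m) (hc : 0 ≤ c)
    (hpq : p + 5 / 4 ≤ q) :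
    ∃ K > 0, ∀ l ∈ Ioc 0 L, |weightOfL a m p l * (-4 * (a / l ^ 4 + p) / l)| ≤
      K * (exp ((a + c) / l ^ 4) * (m / l ^ 4) ^ q) := by
  set B := |a| + |p| * L ^ 4
  set K := 4 * B / m ^ (5 / 4 : ℝ) * (m / L ^ 4) ^ (5 / 4 - (q - p))
  have hK : 0 ≤ K := by positivity
  refine ⟨K + 1, by positivity, fun l ⟨hl, hlL⟩ => ?_⟩
  have hx₀ : 0 < m / L ^ 4 := by have := hl.trans_le hlL; positivity
  have hx : m / L ^ 4 ≤ m / l ^ 4 := by gcongr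
  have hw : 0 < weightOfL a m p l := by unfold weightOfL; positivity
  have hl5 : (m / l ^ 4) ^ (5 / 4 : ℝ) = m ^ (5 / 4 : ℝ) / l ^ 5 := by
    rw [Real.div_rpow hm.le (by positivity), ← Real.rpow_natCast l 4, ← Real.rpow_mul hl.le]
    norm_num
  have hq : (m / l ^ 4) ^ p * (m / l ^ 4) ^ (q - p) = (m / l ^ 4) ^ q := by
    rw [← Real.rpow_add (hx₀.trans_le hx)]; ring_nf
  calc |weightOfL a m p l * (-4 * (a / l ^ 4 + p) / l)|
      = weightOfL a m p l * (4 * |a / l ^ 4 + p| / l) := by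
        rw [abs_mul, abs_of_pos hw, abs_div, abs_mul, abs_of_pos hl]; norm_num
    _ ≤ weightOfL a m p l * (4 * (B / l ^ 4) / l) := by
        gcongr; exact abs_div_pow_four_add_le a p hl hlL
    _ = weightOfL a m p l * (4 * B / m ^ (5 / 4 : ℝ) * (m / l ^ 4) ^ (5 / 4 : ℝ)) := by
        rw [hl5]; field_simp
    _ ≤ weightOfL a m p l * (4 * B / m ^ (5 / 4 : ℝ) *
          ((m / L ^ 4) ^ (5 / 4 - (q - p)) * (m / l ^ 4) ^ (q - p))) := by
        gcongr
        exact rpow_le_rpow_sub_mul_rpow hx₀ hx (by linarith)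
    _ = K * (exp (a / l ^ 4) * (m / l ^ 4) ^ q) := by
        rw [← hq, weightOfL]; ring
    _ ≤ (K + 1) * (exp ((a + c) / l ^ 4) * (m / l ^ 4) ^ q) := by gcongr <;> linarith

lemma abs_deriv_weightOfL_comp_lW_le {T c : ℝ} (a p q : ℝ) (hT : 0 < T) (hm : 0 < m)
    (hc : 0 ≤ c) (hpq : p + 5 / 4 ≤ q) :
    ∃ C > 0, ∀ t ∈ Ioo 0 T, t ≠ T / 2 →
      |deriv (fun τ => weightOfL a m p (lW T τ)) t| ≤
        C * (exp ((a + c) / lW T t ^ 4) * (m / lW T t ^ 4) ^ q) := by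
  obtain ⟨K, hK, hbound⟩ := abs_deriv_weightOfL_le (L := T ^ 2 / 4) a p q hm hc hpq
  refine ⟨K * T, by positivity, fun t ⟨_, htT⟩ htne => ?_⟩
  rcases htne.lt_or_gt with hlt | hgt
  · rw [deriv_comp_lW_of_lt _ hlt, abs_zero]
    positivity
  · have hl := lW_pos hT htT
    have hderiv : HasDerivAt (fun τ => weightOfL a m p (lW T τ)) _ t :=
      (hasDerivAt_weightOfL hm hl).comp t (hasDerivAt_lW_of_gt hgt)
    have hT2t : |T - 2 * t| ≤ T := abs_le.mpr ⟨by linarith, by linarith⟩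
    rw [hderiv.deriv, abs_mul]
    have := mul_le_mul (hbound _ ⟨hl, lW_le⟩) hT2t (abs_nonneg _) (by positivity)
    linarith

end WeightOfL

theorem weight_rho_case2_estimate_general
    (N : ℕ) (Ω : Set (Fin N → ℝ))
    (hΩconn : IsConnected Ω) (hΩb : Bornology.IsBounded Ω)
    (T : ℝ) (hT : 0 < T)
    (η₀ : (Fin N → ℝ) → ℝ) (hη₀sm : ContDiffOn ℝ 2 η₀ (closure Ω))
    :
    ∃ lam₀ > (0 : ℝ), ∀ lam : ℝ, lam₀ ≤ lam →
      ∃ s₀ > (0 : ℝ), ∀ s : ℝ, s₀ * (T ^ 4 + T ^ 8) ≤ s →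
        ∃ C > (0 : ℝ), ∀ t ∈ Ioo (0 : ℝ) T, t ≠ T / 2 →
          |deriv (fun τ => Real.exp (-(s / 2) * betaStar Ω T lam η₀ τ) *
              gamHat Ω T lam η₀ τ ^ (-(25 : ℝ) / 8)) t| ≤
            C * Real.exp ((s / 2) * betaStar Ω T lam η₀ t - s * betaHat Ω T lam η₀ t) *
              gamHat Ω T lam η₀ t ^ ((13 : ℝ) / 8) := by
  refine ⟨1, one_pos, fun lam _ => ⟨1, one_pos, fun s hs => ?_⟩⟩
  have hs0 : 0 ≤ s := le_trans (by positivity) hs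
  have hcpt := isCompact_expVals (lam := lam) hΩb hη₀sm.continuousOn
  have hne : (expVals Ω lam η₀).Nonempty := hΩconn.nonempty.closure.image _
  set A := sSup (expVals Ω lam η₀)
  set m := sInf (expVals Ω lam η₀)
  set E := exp (2 * lam * supAbs Ω η₀)
  have hm : 0 < m := sInf_expVals_pos hcpt hne
  have hmA : m ≤ A := csInf_le_csSup hne hcpt.bddBelow hcpt.bddAbove
  have hβStar (τ : ℝ) : betaStar Ω T lam η₀ τ = (A - E) / lW T τ ^ 4 :=
    betaStar_eq T τ hne hcpt.bddAbove
  have hβHat (τ : ℝ) : betaHat Ω T lam η₀ τ = (m - E) / lW T τ ^ 4 :=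
    betaHat_eq T τ hne hcpt.bddBelow
  have hγHat (τ : ℝ) : gamHat Ω T lam η₀ τ = m / lW T τ ^ 4 :=
    gamHat_eq T τ hne hcpt.bddBelow
  obtain ⟨C, hC, hbound⟩ := abs_deriv_weightOfL_comp_lW_le (-(s / 2) * (A - E)) (-25 / 8)
    (13 / 8) (c := s * (A - m)) hT hm (by nlinarith) (by norm_num)
  refine ⟨C, hC, fun t ht htne => ?_⟩
  have hρ : (fun τ => exp (-(s / 2) * betaStar Ω T lam η₀ τ) *
      gamHat Ω T lam η₀ τ ^ (-(25 : ℝ) / 8)) =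
      fun τ => weightOfL (-(s / 2) * (A - E)) m (-25 / 8) (lW T τ) := by
    funext τ
    rw [hβStar, hγHat, weightOfL, mul_div_assoc]
  rw [hρ, mul_assoc, hγHat]
  convert hbound t ht htne using 4
  rw [hβStar, hβHat]
  ring

/-- Bound for the time derivative of the weight
`ρ(t) = e^{−(s/2)β*} γ̂^{−25/8}`. -/
theorem weight_rho_case2_estimate
    (N : ℕ) (hN : N = 2 ∨ N = 3) (Ω : Set (Fin N → ℝ))
    (hΩo : IsOpen Ω) (hΩconn : IsConnected Ω) (hΩb : Bornology.IsBounded Ω)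
    (T : ℝ) (hT : 0 < T)
    (ω₀ ω' ω : Set (Fin N → ℝ)) (hω₀o : IsOpen ω₀) (hω'o : IsOpen ω') (hωo : IsOpen ω)
    (hω₀ne : ω₀.Nonempty) (hω'ne : ω'.Nonempty) (hωne : ω.Nonempty)
    (hω₀ω' : closure ω₀ ⊆ ω') (hω'ω : closure ω' ⊆ ω) (hωΩ : closure ω ⊆ Ω)
    (η₀ : (Fin N → ℝ) → ℝ) (hη₀sm : ContDiffOn ℝ 2 η₀ (closure Ω))
    (hη₀pos : ∀ x ∈ Ω, 0 < η₀ x) (hη₀bd : ∀ x ∈ frontier Ω, η₀ x = 0)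
    (hη₀grad : ∀ x ∈ closure Ω \ ω₀, 0 < eunorm (grad η₀ x))
    :
    ∃ lam₀ > (0 : ℝ), ∀ lam : ℝ, lam₀ ≤ lam →
      ∃ s₀ > (0 : ℝ), ∀ s : ℝ, s₀ * (T ^ 4 + T ^ 8) ≤ s →
        ∃ C > (0 : ℝ), ∀ t ∈ Ioo (0 : ℝ) T, t ≠ T / 2 →
          |deriv (fun τ => Real.exp (-(s / 2) * betaStar Ω T lam η₀ τ) *
              gamHat Ω T lam η₀ τ ^ (-(25 : ℝ) / 8)) t| ≤
            C * Real.exp ((s / 2) * betaStar Ω T lam η₀ t - s * betaHat Ω T lam η₀ t) *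
              gamHat Ω T lam η₀ t ^ ((13 : ℝ) / 8) :=
  weight_rho_case2_estimate_general N Ω hΩconn hΩb T hT η₀ hη₀sm
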